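/- arXiv:2102.12447 — 2 statements merged into one kernel-verified Lean document; each statement's English description precedes it below -/
import Mathlib

section
/- Let n ≥ 4 be an integer and m > 0 a real number. The function F(r) = (1 + m/(2r^(n-2)))^((n-3)/(n-2)) satisfies, for every r > 0, the identity ((n-1)/(n-3))·F(r)^(-1)·( F''(r) + ((n-2)/r)·F'(r) ) = 2(n-1)·m·r^(n-4)/(m + 2r^(n-2))². -/
/-!
Write `F = u ^ a` with `u r = 1 + (m / 2) r ^ (-k)`, `k = n - 2` and `a = (k - 1) / k`.
The chain rule gives `F'' / F = a (a - 1) (u' / u) ^ 2 + a u'' / u`, so everything reduces to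
the explicit derivatives of the power `r ^ (-k)`; after dividing by `F` the identity is
rational algebra in `r`, `m` and `n`.
-/

open Real

/-- The radial conformal factor `F(r) = (1 + m/(2 r^(n-2)))^((n-3)/(n-2))` relating the
induced cone metric in the Schwarzschild space to the Euclidean cone metric. -/
noncomputable def coneConfFactor (n : ℕ) (m : ℝ) : ℝ → ℝ :=
  fun r => (1 + m / (2 * r ^ (n - 2))) ^ (((n : ℝ) - 3) / ((n : ℝ) - 2))

open Filter Topology

theorem hasDerivAt_deriv_rpow_const {g g' : ℝ → ℝ} {g'' r : ℝ} (a : ℝ)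
    (hg : ∀ᶠ x in 𝓝 r, HasDerivAt g (g' x) x) (hg' : HasDerivAt g' g'' r) (hr : g r ≠ 0) :
    HasDerivAt (deriv fun x => g x ^ a)
      (a * (a - 1) * g r ^ (a - 2) * g' r ^ 2 + a * g r ^ (a - 1) * g'') r := by
  have hg0 : ∀ᶠ x in 𝓝 r, g x ≠ 0 := hg.self_of_nhds.continuousAt.eventually_ne hr
  have hderiv : deriv (fun x => g x ^ a) =ᶠ[𝓝 r] fun x => g' x * a * g x ^ (a - 1) := by
    filter_upwards [hg, hg0] with x hx hx0
    exact (hx.rpow_const (Or.inl hx0)).deriv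
  refine ((hg'.mul_const a).mul (hg.self_of_nhds.rpow_const (Or.inl hr))).congr_of_eventuallyEq
    hderiv |>.congr_deriv ?_
  rw [show a - 1 - 1 = a - 2 by ring]
  ring

theorem hasDerivAt_one_add_mul_zpow (c : ℝ) (k : ℤ) {x : ℝ} (hx : x ≠ 0) :
    HasDerivAt (fun x => 1 + c * x ^ k) (c * k * x ^ (k - 1)) x := by
  simpa [mul_assoc] using ((hasDerivAt_zpow k x (Or.inl hx)).const_mul c).const_add 1

theorem coneConfFactor_eq_one_add_mul_zpow (n : ℕ) (m : ℝ) :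
    coneConfFactor n m =
      fun r => (1 + m / 2 * r ^ (-((n - 2 : ℕ) : ℤ))) ^ (((n : ℝ) - 3) / ((n : ℝ) - 2)) := by
  ext r
  simp [coneConfFactor, zpow_neg, div_eq_mul_inv, mul_comm, mul_left_comm]

/-- for `n ≥ 4`, `m > 0` and every `r > 0`,
`((n-1)/(n-3)) F(r)⁻¹ (F''(r) + ((n-2)/r) F'(r)) = 2 (n-1) m r^(n-4)/(m + 2 r^(n-2))^2`. -/
theorem coneConfFactor_laplacian (n : ℕ) (hn : 4 ≤ n) (m : ℝ) (hm : 0 < m)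
    (r : ℝ) (hr : 0 < r) :
    (((n : ℝ) - 1) / ((n : ℝ) - 3)) * (coneConfFactor n m r)⁻¹ *
        (deriv (deriv (coneConfFactor n m)) r +
          (((n : ℝ) - 2) / r) * deriv (coneConfFactor n m) r)
      = 2 * ((n : ℝ) - 1) * m * r ^ (n - 4) / (m + 2 * r ^ (n - 2)) ^ 2 := by
  obtain ⟨j, rfl⟩ : ∃ j, n = j + 4 := ⟨n - 4, by omega⟩
  set k : ℤ := -((j + 4 - 2 : ℕ) : ℤ)
  set u : ℝ → ℝ := fun x => 1 + m / 2 * x ^ k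
  set u' : ℝ → ℝ := fun x => m / 2 * k * x ^ (k - 1)
  have hu : ∀ᶠ x in 𝓝 r, HasDerivAt u (u' x) x := by
    filter_upwards [lt_mem_nhds hr] with x hx
    exact hasDerivAt_one_add_mul_zpow _ _ hx.ne'
  have hu' : HasDerivAt u' (m / 2 * k * ((k - 1 : ℤ) * r ^ (k - 1 - 1))) r :=
    (hasDerivAt_zpow _ r (Or.inl hr.ne')).const_mul _
  have hur : 0 < u r := by positivity
  rw [coneConfFactor_eq_one_add_mul_zpow, (hasDerivAt_deriv_rpow_const _ hu hu' hur.ne').deriv,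
    (hu.self_of_nhds.rpow_const (Or.inl hur.ne')).deriv]
  set a : ℝ := ((j + 4 : ℕ) - 3) / ((j + 4 : ℕ) - 2)
  rw [show a - 2 = a - 1 - 1 by ring, rpow_sub_one hur.ne', rpow_sub_one hur.ne']
  have hua : 0 < u r ^ a := rpow_pos_of_pos hur a
  simp only [u, u', a, k, zpow_sub_one₀ hr.ne'] at hua ⊢
  rw [show (j + 4 - 2 : ℕ) = j + 2 by omega, show (j + 4 - 4 : ℕ) = j by omega, zpow_neg,
    zpow_natCast, pow_add]
  push_cast
  have hj : (0 : ℝ) ≤ j := j.cast_nonneg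
  have hj3 : (j : ℝ) + 4 - 3 ≠ 0 := by linarith
  have hj2 : (j : ℝ) + 4 - 2 ≠ 0 := by linarith
  field_simp
  ring
end

section
/- Let n ≥ 2 be an integer, R₀ > 0, and let q : [R₀,∞) → ℝ be continuous. Suppose u : [R₀,∞) → ℝ is twice continuously differentiable, positive, satisfies u'(R₀) ≤ 0, and u''(r) + ((n−2)/r)·u'(r) + q(r)·u(r) ≤ 0 for all r ≥ R₀. Then for every continuously differentiable function φ : [R₀,∞) → ℝ with compact support, ∫_{R₀}^{∞} ( φ'(r)² − q(r)·φ(r)² )·r^(n−2) dr ≥ 0. -/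
open Real MeasureTheory Set

/-!
With `w = u'/u`, the boundary term `F = ρ w φ²` satisfies `F' ≤ (φ'² - q φ²) ρ` wherever
`(ρ u')' + q ρ u ≤ 0` (Picone's identity: the defect is `ρ (φ' - w φ)²` plus a nonnegative
multiple of the supersolution inequality). Integrating over `[R₀, R₁]`, where `φ(R₁) = 0`,
bounds the index form below by `-F(R₀) = -ρ(R₀) φ(R₀)² u'(R₀)/u(R₀) ≥ 0`. The radial
operator is the case `ρ = r^(n-2)`, since `r^(n-2) (u'' + ((n-2)/r) u') = (r^(n-2) u')'`.
-/

lemma picone_deriv_le {ρ ρ' u u' u'' φ φ' q : ℝ} (hρ : 0 ≤ ρ) (hu : 0 < u)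
    (hsuper : ρ * u'' + ρ' * u' + q * ρ * u ≤ 0) :
    (ρ' * (u' / u) + ρ * ((u'' * u - u' * u') / u ^ 2)) * φ ^ 2 + ρ * (u' / u) * (2 * φ * φ')
      ≤ (φ' ^ 2 - q * φ ^ 2) * ρ := by
  have hdefect : (φ' ^ 2 - q * φ ^ 2) * ρ
      - ((ρ' * (u' / u) + ρ * ((u'' * u - u' * u') / u ^ 2)) * φ ^ 2
        + ρ * (u' / u) * (2 * φ * φ'))
      = ρ * (φ' - u' / u * φ) ^ 2 - φ ^ 2 / u * (ρ * u'' + ρ' * u' + q * ρ * u) := by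
    field_simp
    ring
  have hsq : 0 ≤ ρ * (φ' - u' / u * φ) ^ 2 := by positivity
  have hsup : 0 ≤ -(φ ^ 2 / u * (ρ * u'' + ρ' * u' + q * ρ * u)) :=
    neg_nonneg.2 (mul_nonpos_of_nonneg_of_nonpos (by positivity) hsuper)
  linarith

theorem index_form_nonneg_of_supersolution {a b : ℝ} (hab : a ≤ b)
    {ρ ρ' u u' u'' φ φ' q : ℝ → ℝ}
    (hρ : ContinuousOn ρ (Icc a b)) (hu : ContinuousOn u (Icc a b))
    (hu' : ContinuousOn u' (Icc a b)) (hφ : ContinuousOn φ (Icc a b))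
    (hρ_deriv : ∀ x ∈ Ioo a b, HasDerivAt ρ (ρ' x) x)
    (hu_deriv : ∀ x ∈ Ioo a b, HasDerivAt u (u' x) x)
    (hu'_deriv : ∀ x ∈ Ioo a b, HasDerivAt u' (u'' x) x)
    (hφ_deriv : ∀ x ∈ Ioo a b, HasDerivAt φ (φ' x) x)
    (hρ_nonneg : ∀ x ∈ Icc a b, 0 ≤ ρ x) (hu_pos : ∀ x ∈ Icc a b, 0 < u x)
    (hsuper : ∀ x ∈ Ioo a b, ρ x * u'' x + ρ' x * u' x + q x * ρ x * u x ≤ 0)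
    (ha : u' a ≤ 0) (hb : φ b = 0)
    (hint : IntegrableOn (fun x ↦ (φ' x ^ 2 - q x * φ x ^ 2) * ρ x) (Icc a b)) :
    0 ≤ ∫ x in a..b, (φ' x ^ 2 - q x * φ x ^ 2) * ρ x := by
  set F : ℝ → ℝ := fun x ↦ ρ x * (u' x / u x) * φ x ^ 2
  have hF_cont : ContinuousOn F (Icc a b) :=
    (hρ.mul (hu'.div hu fun x hx ↦ (hu_pos x hx).ne')).mul (hφ.pow 2)
  have hF_deriv : ∀ x ∈ Ioo a b, HasDerivAt F
      ((ρ' x * (u' x / u x) + ρ x * ((u'' x * u x - u' x * u' x) / u x ^ 2)) * φ x ^ 2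
        + ρ x * (u' x / u x) * (2 * φ x * φ' x)) x := by
    intro x hx
    have hφ2 : HasDerivAt (fun y ↦ φ y ^ 2) (2 * φ x * φ' x) x :=
      ((hφ_deriv x hx).fun_pow 2).congr_deriv (by norm_num)
    exact ((hρ_deriv x hx).mul ((hu'_deriv x hx).div (hu_deriv x hx)
      (hu_pos x (Ioo_subset_Icc_self hx)).ne')).mul hφ2
  have hFTC := intervalIntegral.sub_le_integral_of_hasDeriv_right_of_le hab hF_cont
    (fun x hx ↦ (hF_deriv x hx).hasDerivWithinAt) hint
    (fun x hx ↦ picone_deriv_le (hρ_nonneg x (Ioo_subset_Icc_self hx))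
      (hu_pos x (Ioo_subset_Icc_self hx)) (hsuper x hx))
  have hFb : F b = 0 := by simp [F, hb]
  have hFa : F a ≤ 0 := by
    have ha_mem : a ∈ Icc a b := left_mem_Icc.2 hab
    exact mul_nonpos_of_nonpos_of_nonneg
      (mul_nonpos_of_nonneg_of_nonpos (hρ_nonneg a ha_mem)
        (div_nonpos_of_nonpos_of_nonneg ha (hu_pos a ha_mem).le)) (sq_nonneg _)
  linarith

lemma pow_mul_radial_eq {r : ℝ} (hr : r ≠ 0) (m : ℕ) (u u' u'' q : ℝ) :
    r ^ m * (u'' + m / r * u' + q * u) = r ^ m * u'' + m * r ^ (m - 1) * u' + q * r ^ m * u := by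
  rcases Nat.eq_zero_or_pos m with rfl | hm
  · simp
  · rw [← pow_sub_one_mul hm.ne' r]
    field_simp

lemma ContDiffOn.hasDerivAt_derivWithin {𝕜 E : Type*} [NontriviallyNormedField 𝕜]
    [NormedAddCommGroup E] [NormedSpace 𝕜 E] {f : 𝕜 → E} {k : WithTop ℕ∞} {s : Set 𝕜} {x : 𝕜}
    (hf : ContDiffOn 𝕜 k f s) (hk : k ≠ 0) (hs : s ∈ nhds x) :
    HasDerivAt f (derivWithin f s x) x := by
  rw [derivWithin_of_mem_nhds hs]
  exact ((hf.differentiableOn hk).differentiableAt hs).hasDerivAt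

lemma deriv_eq_zero_of_forall_le_eq_zero {f : ℝ → ℝ} {R x : ℝ} (hf : ∀ r, R ≤ r → f r = 0)
    (hx : R < x) : deriv f x = 0 := by
  have hloc : f =ᶠ[nhds x] fun _ ↦ 0 :=
    Filter.eventually_of_mem (Ioi_mem_nhds hx) fun y hy ↦ hf y hy.le
  rw [hloc.deriv_eq, deriv_const]

lemma integral_Ioi_index_form_eq_intervalIntegral {φ q ρ : ℝ → ℝ} {a b : ℝ} (hab : a ≤ b)
    (hφ : ∀ r, b ≤ r → φ r = 0) :
    ∫ r in Ioi a, (deriv φ r ^ 2 - q r * φ r ^ 2) * ρ r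
      = ∫ r in a..b, (derivWithin φ (Ici a) r ^ 2 - q r * φ r ^ 2) * ρ r := by
  have hφ'_eq : ∀ r ∈ Ioi a, derivWithin φ (Ici a) r = deriv φ r := fun r hr ↦
    derivWithin_of_mem_nhds (Ici_mem_nhds hr)
  calc ∫ r in Ioi a, (deriv φ r ^ 2 - q r * φ r ^ 2) * ρ r
      = ∫ r in Ioi a, (derivWithin φ (Ici a) r ^ 2 - q r * φ r ^ 2) * ρ r :=
        setIntegral_congr_fun measurableSet_Ioi fun r hr ↦ by rw [hφ'_eq r hr]
    _ = ∫ r in Ioc a b, (derivWithin φ (Ici a) r ^ 2 - q r * φ r ^ 2) * ρ r := by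
        refine setIntegral_eq_of_subset_of_forall_sdiff_eq_zero measurableSet_Ioi
          Ioc_subset_Ioi_self fun r ⟨hra, hrb⟩ ↦ ?_
        have hr : b < r := not_le.1 fun h ↦ hrb ⟨hra, h⟩
        simp [hφ r hr.le, hφ'_eq r hra, deriv_eq_zero_of_forall_le_eq_zero hφ hr]
    _ = ∫ r in a..b, (derivWithin φ (Ici a) r ^ 2 - q r * φ r ^ 2) * ρ r :=
        (intervalIntegral.integral_of_le hab).symm

/-- radial Fischer–Colbrie criterion: let `n ≥ 2`, `R₀ > 0`, `q` continuous
on `[R₀,∞)`, and let `u` be a positive, twice continuously differentiable function on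
`[R₀,∞)` with `u'(R₀) ≤ 0` satisfying `u'' + ((n-2)/r) u' + q u ≤ 0` on `[R₀,∞)`. Then for
every continuously differentiable `φ : [R₀,∞) → ℝ` with compact support,
`∫_{R₀}^∞ (φ'(r)² - q(r) φ(r)²) r^(n-2) dr ≥ 0`. -/
theorem radial_fischer_colbrie (n : ℕ) (hn : 2 ≤ n) (R₀ : ℝ) (hR₀ : 0 < R₀)
    (q : ℝ → ℝ) (hq : ContinuousOn q (Set.Ici R₀))
    (u : ℝ → ℝ) (hu : ContDiffOn ℝ 2 u (Set.Ici R₀))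
    (hupos : ∀ r ∈ Set.Ici R₀, 0 < u r)
    (hu' : derivWithin u (Set.Ici R₀) R₀ ≤ 0)
    (hode : ∀ r ∈ Set.Ici R₀,
      derivWithin (derivWithin u (Set.Ici R₀)) (Set.Ici R₀) r +
        (((n : ℝ) - 2) / r) * derivWithin u (Set.Ici R₀) r + q r * u r ≤ 0) :
    ∀ φ : ℝ → ℝ, ContDiffOn ℝ 1 φ (Set.Ici R₀) →
      (∃ R₁ : ℝ, ∀ r : ℝ, R₁ ≤ r → φ r = 0) →
      0 ≤ ∫ r in Set.Ioi R₀, (deriv φ r ^ 2 - q r * φ r ^ 2) * r ^ (n - 2) := by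
  rintro φ hφ ⟨R₁', hR₁'⟩
  set R₁ := max R₁' R₀
  have hR : R₀ ≤ R₁ := le_max_right _ _
  have hφ_zero : ∀ r, R₁ ≤ r → φ r = 0 := fun r hr ↦ hR₁' r ((le_max_left _ _).trans hr)
  have hIcc : Icc R₀ R₁ ⊆ Ici R₀ := Icc_subset_Ici_self
  have hu'_diff : ContDiffOn ℝ 1 (derivWithin u (Ici R₀)) (Ici R₀) :=
    hu.derivWithin (uniqueDiffOn_Ici R₀) (by norm_num)
  have hφ'_cont : ContinuousOn (derivWithin φ (Ici R₀)) (Ici R₀) :=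
    hφ.continuousOn_derivWithin (uniqueDiffOn_Ici R₀) le_rfl
  rw [integral_Ioi_index_form_eq_intervalIntegral hR hφ_zero]
  refine index_form_nonneg_of_supersolution hR (ρ := fun r ↦ r ^ (n - 2))
    (continuous_pow _).continuousOn (hu.continuousOn.mono hIcc)
    (hu'_diff.continuousOn.mono hIcc) (hφ.continuousOn.mono hIcc)
    (fun r _ ↦ hasDerivAt_pow _ r)
    (fun r hr ↦ hu.hasDerivAt_derivWithin (by norm_num) (Ici_mem_nhds hr.1))
    (fun r hr ↦ hu'_diff.hasDerivAt_derivWithin (by norm_num) (Ici_mem_nhds hr.1))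
    (fun r hr ↦ hφ.hasDerivAt_derivWithin (by norm_num) (Ici_mem_nhds hr.1))
    (fun r hr ↦ pow_nonneg (hR₀.le.trans hr.1) _) (fun r hr ↦ hupos r hr.1)
    (fun r hr ↦ ?_) hu' (hφ_zero R₁ le_rfl)
    ((((hφ'_cont.pow 2).sub (hq.mul (hφ.continuousOn.pow 2))).mul
      (continuous_pow _).continuousOn).mono hIcc).integrableOn_Icc
  have hr_pos : 0 < r := hR₀.trans hr.1
  rw [← pow_mul_radial_eq hr_pos.ne', Nat.cast_sub hn, Nat.cast_ofNat]
  exact mul_nonpos_of_nonneg_of_nonpos (by positivity) (hode r (Ioo_subset_Icc_self hr).1)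
end
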